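/- Let λ ≤ 0 be a real number. Then for all x, y ∈ (0,1) with x ≠ y, the strict inequality M_λ(m(x), m(y)) < m(M_λ(x, y)) holds; equality M_λ(m(x), m(y)) = m(M_λ(x, y)) holds if and only if x = y. -/

import Mathlib

open Real Set Filter

/-- Complete elliptic integral of the first kind. -/
noncomputable def K (r : ℝ) : ℝ :=
  ∫ θ in (0:ℝ)..(π/2), 1 / Real.sqrt (1 - r^2 * Real.sin θ ^ 2)

/-- Complete elliptic integral of the second kind. -/
noncomputable def E (r : ℝ) : ℝ :=
  ∫ θ in (0:ℝ)..(π/2), Real.sqrt (1 - r^2 * Real.sin θ ^ 2)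

/-- Complementary complete elliptic integral of the first kind: `K'(r) = K(√(1-r²))`. -/
noncomputable def K' (r : ℝ) : ℝ := K (Real.sqrt (1 - r^2))

/-- Complementary complete elliptic integral of the second kind: `E'(r) = E(√(1-r²))`. -/
noncomputable def E' (r : ℝ) : ℝ := E (Real.sqrt (1 - r^2))

/-- The special function `m(r) = (2/π) r'² K(r) K'(r)` (here `r'² = 1 - r²`). -/
noncomputable def m (r : ℝ) : ℝ := (2/π) * (1 - r^2) * K r * K' r

/-- The power mean of order `lam`: `M_λ(x,y)`. -/
noncomputable def pmean (lam x y : ℝ) : ℝ :=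
  if lam = 0 then Real.sqrt (x * y) else ((x ^ lam + y ^ lam) / 2) ^ (1 / lam)

/-! Write `r' = √(1 - r²)` and `Δ = 1 - r² sin² θ`. Differentiating under the integral sign gives
`dE/dr = (E - K)/r` and, after evaluating `∫ sin² θ / Δ^{3/2}` by integrating the derivative of
`r² sin θ cos θ / √Δ`, `dK/dr = (E - r'² K)/(r r'²)`. Hence `r m'(r)/m(r) = (E/K - E'/K' - 1)/r'²`,
which is negative and strictly decreasing in `r` because `E/K` decreases and `E'/K'` increases.
So `m` decreases and `t ↦ log m(eᵗ)` is strictly concave on `t < 0`, i.e. `√(m x m y) < m √(xy)`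
for `x ≠ y`. For `λ ≤ 0` the power mean is at most the geometric mean, whence
`M_λ(m x, m y) ≤ √(m x m y) < m √(xy) ≤ m (M_λ(x, y))`. -/

open MeasureTheory

section Calculus

variable {D : Set ℝ} {f f' : ℝ → ℝ}

lemma strictAntiOn_of_hasDerivAt_neg (hD : Convex ℝ D)
    (hf : ∀ x ∈ D, HasDerivAt f (f' x) x) (hf' : ∀ x ∈ D, f' x < 0) : StrictAntiOn f D :=
  strictAntiOn_of_hasDerivWithinAt_neg hD
    (fun x hx => (hf x hx).continuousAt.continuousWithinAt)
    (fun x hx => (hf x (interior_subset hx)).hasDerivWithinAt)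
    (fun x hx => hf' x (interior_subset hx))

lemma strictConcaveOn_of_hasDerivAt_of_strictAntiOn (hD : Convex ℝ D)
    (hf : ∀ x ∈ D, HasDerivAt f (f' x) x) (hf' : StrictAntiOn f' D) : StrictConcaveOn ℝ D f :=
  StrictAntiOn.strictConcaveOn_of_deriv hD (fun x hx => (hf x hx).continuousAt.continuousWithinAt)
    ((hf'.mono interior_subset).congr fun x hx => (hf x (interior_subset hx)).deriv.symm)

theorem hasDerivAt_intervalIntegral_of_continuousOn {G : Type*} [NormedAddCommGroup G]
    [NormedSpace ℝ G] {F F' : ℝ → ℝ → G} {U : Set ℝ} {a b x₀ : ℝ}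
    (hU : IsOpen U) (hx₀ : x₀ ∈ U)
    (hF : ∀ x ∈ U, ContinuousOn (F x) (uIcc a b))
    (hF' : ContinuousOn (Function.uncurry F') (U ×ˢ uIcc a b))
    (hderiv : ∀ x ∈ U, ∀ t ∈ uIcc a b, HasDerivAt (F · t) (F' x t) x) :
    HasDerivAt (fun x => ∫ t in a..b, F x t) (∫ t in a..b, F' x₀ t) x₀ := by
  obtain ⟨δ, hδ, hδU⟩ := Metric.nhds_basis_closedBall.mem_iff.1 (hU.mem_nhds hx₀)
  obtain ⟨C, hC⟩ := ((isCompact_closedBall x₀ δ).prod isCompact_uIcc).exists_bound_of_continuousOn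
      (hF'.mono (prod_mono hδU subset_rfl))
  have hball : Metric.ball x₀ δ ⊆ U := Metric.ball_subset_closedBall.trans hδU
  have hF'₀ : ContinuousOn (F' x₀) (uIcc a b) :=
    hF'.comp (f := fun t => (x₀, t)) (by fun_prop) fun _ ht => ⟨hx₀, ht⟩
  refine (intervalIntegral.hasDerivAt_integral_of_dominated_loc_of_deriv_le (bound := fun _ => C)
    (Metric.ball_mem_nhds x₀ hδ) ?_ (hF x₀ hx₀).intervalIntegrable
    ((hF'₀.mono uIoc_subset_uIcc).aestronglyMeasurable measurableSet_uIoc) ?_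
    intervalIntegrable_const ?_).2
  · filter_upwards [hU.mem_nhds hx₀] with x hx
    exact ((hF x hx).mono uIoc_subset_uIcc).aestronglyMeasurable measurableSet_uIoc
  · exact Eventually.of_forall fun t ht x hx =>
      hC (x, t) ⟨Metric.ball_subset_closedBall hx, uIoc_subset_uIcc ht⟩
  · exact Eventually.of_forall fun t ht x hx => hderiv x (hball hx) t (uIoc_subset_uIcc ht)

end Calculus

section Integrand

variable {r : ℝ}

lemma sq_lt_one_of_mem_Ioo {x : ℝ} (hx : x ∈ Ioo (0:ℝ) 1) : x ^ 2 < 1 :=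
  pow_lt_one₀ hx.1.le hx.2 two_ne_zero

lemma one_sub_sq_mul_sin_sq_pos (hr : r ^ 2 < 1) (θ : ℝ) : 0 < 1 - r ^ 2 * sin θ ^ 2 := by
  nlinarith [sin_sq_le_one θ, sq_nonneg r]

lemma sqrt_one_sub_sq_mul_sin_sq_pos (hr : r ^ 2 < 1) (θ : ℝ) :
    0 < √(1 - r ^ 2 * sin θ ^ 2) :=
  sqrt_pos.2 (one_sub_sq_mul_sin_sq_pos hr θ)

lemma continuous_one_div_sqrt_one_sub_sq_mul_sin_sq (hr : r ^ 2 < 1) :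
    Continuous fun θ => 1 / √(1 - r ^ 2 * sin θ ^ 2) :=
  continuous_const.div (by fun_prop) fun θ => (sqrt_one_sub_sq_mul_sin_sq_pos hr θ).ne'

lemma E_pos (hr : r ^ 2 < 1) : 0 < E r :=
  intervalIntegral.integral_pos (by positivity) (by fun_prop)
    (fun θ _ => sqrt_nonneg _)
    ⟨0, ⟨le_rfl, by positivity⟩, sqrt_one_sub_sq_mul_sin_sq_pos hr 0⟩

lemma K_pos (hr : r ^ 2 < 1) : 0 < K r :=
  intervalIntegral.integral_pos (by positivity)
    (continuous_one_div_sqrt_one_sub_sq_mul_sin_sq hr).continuousOn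
    (fun θ _ => by positivity)
    ⟨0, ⟨le_rfl, by positivity⟩, one_div_pos.2 (sqrt_one_sub_sq_mul_sin_sq_pos hr 0)⟩

lemma E_le_K (hr : r ^ 2 < 1) : E r ≤ K r := by
  refine intervalIntegral.integral_mono_on (by positivity) (Continuous.intervalIntegrable
    (by fun_prop) _ _) ((continuous_one_div_sqrt_one_sub_sq_mul_sin_sq hr).intervalIntegrable _ _)
    fun θ _ => ?_
  have hΔ := one_sub_sq_mul_sin_sq_pos hr θ
  rw [le_div_iff₀ (sqrt_pos.2 hΔ), mul_self_sqrt hΔ.le]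
  nlinarith [sq_nonneg (r * sin θ)]

end Integrand

section Derivatives

lemma hasDerivAt_sqrt_one_sub_sq_mul {c x : ℝ} (h : 0 < 1 - x ^ 2 * c ^ 2) :
    HasDerivAt (fun y => √(1 - y ^ 2 * c ^ 2)) (-(x * c ^ 2) / √(1 - x ^ 2 * c ^ 2)) x := by
  have := ((hasDerivAt_pow 2 x).mul_const (c ^ 2)).const_sub 1 |>.sqrt h.ne'
  convert this using 1
  field_simp
  ring

lemma hasDerivAt_one_div_sqrt_one_sub_sq_mul {c x : ℝ} (h : 0 < 1 - x ^ 2 * c ^ 2) :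
    HasDerivAt (fun y => 1 / √(1 - y ^ 2 * c ^ 2))
      (x * c ^ 2 / √(1 - x ^ 2 * c ^ 2) ^ 3) x := by
  have hs := sqrt_pos.2 h
  have := (hasDerivAt_sqrt_one_sub_sq_mul h).fun_inv hs.ne'
  simp only [one_div]
  refine this.congr_deriv ?_
  field_simp

variable {r : ℝ}

lemma hasDerivAt_E (hr₀ : r ≠ 0) (hr : r ^ 2 < 1) : HasDerivAt E ((E r - K r) / r) r := by
  have h := hasDerivAt_intervalIntegral_of_continuousOn (a := 0) (b := π / 2)
    (F := fun x θ => √(1 - x ^ 2 * sin θ ^ 2))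
    (F' := fun x θ => -(x * sin θ ^ 2) / √(1 - x ^ 2 * sin θ ^ 2))
    (U := {x | x ^ 2 < 1}) (isOpen_lt (by fun_prop) continuous_const) hr (fun _ _ => by fun_prop)
    (ContinuousOn.div (by fun_prop) (by fun_prop) fun p hp =>
      (sqrt_one_sub_sq_mul_sin_sq_pos hp.1 p.2).ne')
    fun x hx θ _ => hasDerivAt_sqrt_one_sub_sq_mul (one_sub_sq_mul_sin_sq_pos hx θ)
  refine h.congr_deriv ?_
  have hpt : ∀ θ, -(r * sin θ ^ 2) / √(1 - r ^ 2 * sin θ ^ 2)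
      = (√(1 - r ^ 2 * sin θ ^ 2) - 1 / √(1 - r ^ 2 * sin θ ^ 2)) / r := fun θ => by
    have hΔ := one_sub_sq_mul_sin_sq_pos hr θ
    field_simp
    rw [sq_sqrt hΔ.le]
    ring
  simp_rw [hpt]
  rw [intervalIntegral.integral_div, intervalIntegral.integral_sub
    (Continuous.intervalIntegrable (by fun_prop) _ _)
    ((continuous_one_div_sqrt_one_sub_sq_mul_sin_sq hr).intervalIntegrable _ _)]
  rfl

lemma hasDerivAt_sq_mul_sin_mul_cos_div_sqrt (hr : r ^ 2 < 1) (θ : ℝ) :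
    HasDerivAt (fun θ => r ^ 2 * (sin θ * cos θ) / √(1 - r ^ 2 * sin θ ^ 2))
      (√(1 - r ^ 2 * sin θ ^ 2) - (1 - r ^ 2) * (1 / √(1 - r ^ 2 * sin θ ^ 2))
        - r ^ 2 * (1 - r ^ 2) * (sin θ ^ 2 / √(1 - r ^ 2 * sin θ ^ 2) ^ 3)) θ := by
  have hΔ := one_sub_sq_mul_sin_sq_pos hr θ
  have hs := sqrt_pos.2 hΔ
  have := (((hasDerivAt_sin θ).mul (hasDerivAt_cos θ)).const_mul (r ^ 2)).div
    (((hasDerivAt_sin θ).pow 2 |>.const_mul (r ^ 2) |>.const_sub 1).sqrt hΔ.ne') hs.ne'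
  simp only [Pi.pow_apply, Pi.mul_apply] at this
  refine this.congr_deriv ?_
  have hc : cos θ ^ 2 = 1 - sin θ ^ 2 := by rw [← sin_sq_add_cos_sq θ]; ring
  field_simp
  rw [sq_sqrt hΔ.le, hc]
  ring

lemma sq_mul_one_sub_sq_mul_integral_sin_sq_div_sqrt_pow_three (hr : r ^ 2 < 1) :
    r ^ 2 * (1 - r ^ 2) * ∫ θ in (0:ℝ)..(π/2), sin θ ^ 2 / √(1 - r ^ 2 * sin θ ^ 2) ^ 3
      = E r - (1 - r ^ 2) * K r := by
  have hE : IntervalIntegrable (fun θ => √(1 - r ^ 2 * sin θ ^ 2)) volume 0 (π / 2) :=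
    Continuous.intervalIntegrable (by fun_prop) _ _
  have hK := (continuous_one_div_sqrt_one_sub_sq_mul_sin_sq hr).intervalIntegrable
    (μ := volume) 0 (π / 2)
  have hS : IntervalIntegrable (fun θ => sin θ ^ 2 / √(1 - r ^ 2 * sin θ ^ 2) ^ 3)
      volume 0 (π / 2) :=
    Continuous.intervalIntegrable (by fun_prop (disch :=
      exact fun θ => (pow_pos (sqrt_one_sub_sq_mul_sin_sq_pos hr θ) 3).ne')) _ _
  have hFTC := intervalIntegral.integral_eq_sub_of_hasDerivAt
    (fun θ _ => hasDerivAt_sq_mul_sin_mul_cos_div_sqrt hr θ)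
    ((hE.sub (hK.const_mul _)).sub (hS.const_mul _))
  rw [intervalIntegral.integral_sub (hE.sub (hK.const_mul _)) (hS.const_mul _),
    intervalIntegral.integral_sub hE (hK.const_mul _), intervalIntegral.integral_const_mul,
    intervalIntegral.integral_const_mul] at hFTC
  simp only [sin_zero, cos_pi_div_two, mul_zero, zero_mul, zero_div, sub_zero] at hFTC
  change E r - (1 - r ^ 2) * K r - _ = _ at hFTC
  linarith

lemma hasDerivAt_K (hr₀ : r ≠ 0) (hr : r ^ 2 < 1) :
    HasDerivAt K ((E r - (1 - r ^ 2) * K r) / (r * (1 - r ^ 2))) r := by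
  have h := hasDerivAt_intervalIntegral_of_continuousOn (a := 0) (b := π / 2)
    (F := fun x θ => 1 / √(1 - x ^ 2 * sin θ ^ 2))
    (F' := fun x θ => x * sin θ ^ 2 / √(1 - x ^ 2 * sin θ ^ 2) ^ 3)
    (U := {x | x ^ 2 < 1}) (isOpen_lt (by fun_prop) continuous_const) hr
    (fun x hx => (continuous_one_div_sqrt_one_sub_sq_mul_sin_sq hx).continuousOn)
    (ContinuousOn.div (by fun_prop) (by fun_prop) fun p hp =>
      (pow_pos (sqrt_one_sub_sq_mul_sin_sq_pos hp.1 p.2) 3).ne')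
    fun x hx θ _ => hasDerivAt_one_div_sqrt_one_sub_sq_mul (one_sub_sq_mul_sin_sq_pos hx θ)
  refine h.congr_deriv ?_
  simp_rw [mul_div_assoc]
  rw [intervalIntegral.integral_const_mul,
    ← sq_mul_one_sub_sq_mul_integral_sin_sq_div_sqrt_pow_three hr]
  have : 1 - r ^ 2 ≠ 0 := by linarith
  field_simp

end Derivatives

section Complementary

variable {r : ℝ}

lemma sqrt_one_sub_sq_sq_lt_one (hr₀ : r ≠ 0) (hr : r ^ 2 < 1) : √(1 - r ^ 2) ^ 2 < 1 := by
  rw [sq_sqrt (by linarith)]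
  linarith [show 0 < r ^ 2 by positivity]

lemma K'_pos (hr₀ : r ≠ 0) (hr : r ^ 2 < 1) : 0 < K' r :=
  K_pos (sqrt_one_sub_sq_sq_lt_one hr₀ hr)

lemma E'_pos (hr₀ : r ≠ 0) (hr : r ^ 2 < 1) : 0 < E' r :=
  E_pos (sqrt_one_sub_sq_sq_lt_one hr₀ hr)

lemma m_pos (hr₀ : r ≠ 0) (hr : r ^ 2 < 1) : 0 < m r := by
  have := K_pos hr
  have := K'_pos hr₀ hr
  have : 0 < 1 - r ^ 2 := by linarith
  unfold m
  positivity

lemma m_pos_of_mem_Ioo (hr : r ∈ Ioo (0:ℝ) 1) : 0 < m r :=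
  m_pos hr.1.ne' (sq_lt_one_of_mem_Ioo hr)

lemma hasDerivAt_K' (hr₀ : r ≠ 0) (hr : r ^ 2 < 1) :
    HasDerivAt K' (-((E' r - r ^ 2 * K' r) / (r * (1 - r ^ 2)))) r := by
  have hΔ : 0 < 1 - r ^ 2 := by linarith
  have hs : √(1 - r ^ 2) ≠ 0 := (sqrt_pos.2 hΔ).ne'
  have h := (hasDerivAt_K hs (sqrt_one_sub_sq_sq_lt_one hr₀ hr)).comp r
    (((hasDerivAt_pow 2 r).const_sub 1).sqrt hΔ.ne')
  refine h.congr_deriv ?_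
  have hs2 : √(1 - r ^ 2) ^ 2 = 1 - r ^ 2 := sq_sqrt hΔ.le
  change _ = -((E (√(1 - r ^ 2)) - r ^ 2 * K (√(1 - r ^ 2))) / (r * (1 - r ^ 2)))
  rw [hs2, sub_sub_cancel]
  field_simp
  rw [hs2]
  ring

lemma hasDerivAt_m (hr₀ : r ≠ 0) (hr : r ^ 2 < 1) :
    HasDerivAt m (2 / (π * r) * (E r * K' r - E' r * K r - K r * K' r)) r := by
  have h := ((((hasDerivAt_pow 2 r).const_sub 1).const_mul (2 / π)).mul
    (hasDerivAt_K hr₀ hr)).mul (hasDerivAt_K' hr₀ hr)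
  refine h.congr_deriv ?_
  have : 1 - r ^ 2 ≠ 0 := by linarith
  simp only [Pi.mul_apply]
  field_simp
  ring

lemma strictAntiOn_m : StrictAntiOn m (Ioo 0 1) := by
  refine strictAntiOn_of_hasDerivAt_neg (convex_Ioo 0 1)
    (fun x hx => hasDerivAt_m hx.1.ne' (sq_lt_one_of_mem_Ioo hx)) fun x hx => ?_
  have hx2 : x ^ 2 < 1 := sq_lt_one_of_mem_Ioo hx
  have hEK := mul_le_mul_of_nonneg_right (E_le_K hx2) (K'_pos hx.1.ne' hx2).le
  have := mul_pos (E'_pos hx.1.ne' hx2) (K_pos hx2)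
  exact mul_neg_of_pos_of_neg (by have := hx.1; positivity) (by linarith)

lemma strictAntiOn_E_div_K : StrictAntiOn (fun r => E r / K r) (Ioo 0 1) := by
  refine strictAntiOn_of_hasDerivAt_neg (convex_Ioo 0 1) (fun x hx =>
    (hasDerivAt_E hx.1.ne' (sq_lt_one_of_mem_Ioo hx)).div
      (hasDerivAt_K hx.1.ne' (sq_lt_one_of_mem_Ioo hx))
      (K_pos (sq_lt_one_of_mem_Ioo hx)).ne') fun x hx => ?_
  have hx2 : x ^ 2 < 1 := sq_lt_one_of_mem_Ioo hx
  have hK := K_pos hx2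
  have hΔ : 0 < 1 - x ^ 2 := by linarith
  have hx0 := hx.1
  rw [show (E x - K x) / x * K x - E x * ((E x - (1 - x ^ 2) * K x) / (x * (1 - x ^ 2)))
      = -((E x - (1 - x ^ 2) * K x) ^ 2 + x ^ 2 * (1 - x ^ 2) * K x ^ 2) / (x * (1 - x ^ 2)) by
    field_simp; ring]
  exact div_neg_of_neg_of_pos (div_neg_of_neg_of_pos (neg_neg_of_pos (by positivity))
    (by positivity)) (by positivity)

end Complementary

section LogConcavity

lemma sqrt_one_sub_sq_mem_Ioo {r : ℝ} (hr : r ∈ Ioo (0:ℝ) 1) :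
    √(1 - r ^ 2) ∈ Ioo (0:ℝ) 1 := by
  have hr2 : r ^ 2 < 1 := sq_lt_one_of_mem_Ioo hr
  refine ⟨sqrt_pos.2 (by linarith), ?_⟩
  rw [sqrt_lt' one_pos]
  nlinarith [hr.1]

lemma sqrt_mul_mem_Ioo {x y : ℝ} (hx : x ∈ Ioo (0:ℝ) 1) (hy : y ∈ Ioo (0:ℝ) 1) :
    √(x * y) ∈ Ioo (0:ℝ) 1 :=
  ⟨sqrt_pos.2 (mul_pos hx.1 hy.1), (sqrt_lt' one_pos).2 (by nlinarith [hx.2, hy.2, hx.1])⟩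

lemma strictMonoOn_E'_div_K' : StrictMonoOn (fun r => E' r / K' r) (Ioo 0 1) := by
  intro a ha b hb hab
  refine strictAntiOn_E_div_K (sqrt_one_sub_sq_mem_Ioo hb) (sqrt_one_sub_sq_mem_Ioo ha) ?_
  exact sqrt_lt_sqrt (by nlinarith [hb.2, hb.1]) (by nlinarith [ha.1])

lemma E_div_K_sub_E'_div_K'_sub_one_neg {r : ℝ} (hr₀ : r ≠ 0) (hr : r ^ 2 < 1) :
    E r / K r - E' r / K' r - 1 < 0 := by
  have := (div_le_one (K_pos hr)).2 (E_le_K hr)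
  have := div_pos (E'_pos hr₀ hr) (K'_pos hr₀ hr)
  linarith

lemma strictAntiOn_E_div_K_sub_E'_div_K'_sub_one_div :
    StrictAntiOn (fun r => (E r / K r - E' r / K' r - 1) / (1 - r ^ 2)) (Ioo 0 1) := by
  intro a ha b hb hab
  have ha2 : a ^ 2 < 1 := sq_lt_one_of_mem_Ioo ha
  have hb2 : b ^ 2 < 1 := sq_lt_one_of_mem_Ioo hb
  have hN := E_div_K_sub_E'_div_K'_sub_one_neg ha.1.ne' ha2
  have hEK := strictAntiOn_E_div_K ha hb hab
  have hE'K' := strictMonoOn_E'_div_K' ha hb hab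
  simp only at hEK hE'K' ⊢
  rw [div_lt_div_iff₀ (by linarith) (by linarith)]
  nlinarith [mul_lt_mul_of_neg_left (show 1 - a ^ 2 > 1 - b ^ 2 by nlinarith [ha.1]) hN]

lemma hasDerivAt_log_m_exp {t : ℝ} (ht : t < 0) :
    HasDerivAt (fun t => log (m (exp t)))
      ((E (exp t) / K (exp t) - E' (exp t) / K' (exp t) - 1) / (1 - exp t ^ 2)) t := by
  have hr₀ := (exp_pos t).ne'
  have hr : exp t ^ 2 < 1 := pow_lt_one₀ (exp_pos t).le (exp_lt_one_iff.2 ht) two_ne_zero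
  have h := ((hasDerivAt_m hr₀ hr).comp t (hasDerivAt_exp t)).log (m_pos hr₀ hr).ne'
  refine h.congr_deriv ?_
  have := K_pos hr
  have := K'_pos hr₀ hr
  have : 1 - exp t ^ 2 ≠ 0 := by linarith
  simp only [Function.comp_apply, m]
  field_simp

lemma strictConcaveOn_log_m_exp : StrictConcaveOn ℝ (Iio 0) (fun t => log (m (exp t))) :=
  strictConcaveOn_of_hasDerivAt_of_strictAntiOn (convex_Iio 0)
    (fun _ ht => hasDerivAt_log_m_exp ht) fun s hs t ht hst =>
      strictAntiOn_E_div_K_sub_E'_div_K'_sub_one_div ⟨exp_pos s, exp_lt_one_iff.2 hs⟩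
        ⟨exp_pos t, exp_lt_one_iff.2 ht⟩ (exp_lt_exp.2 hst)

lemma sqrt_mul_m_lt_m_sqrt_mul {x y : ℝ} (hx : x ∈ Ioo (0:ℝ) 1) (hy : y ∈ Ioo (0:ℝ) 1)
    (hxy : x ≠ y) : √(m x * m y) < m √(x * y) := by
  have hxy₀ := mul_pos hx.1 hy.1
  have hmx := m_pos_of_mem_Ioo hx
  have hmy := m_pos_of_mem_Ioo hy
  have hm := m_pos_of_mem_Ioo (sqrt_mul_mem_Ioo hx hy)
  have hne : log x ≠ log y := fun h => hxy (log_injOn_pos hx.1 hy.1 h)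
  have key := strictConcaveOn_log_m_exp.2 (log_neg hx.1 hx.2) (log_neg hy.1 hy.2) hne
    (one_half_pos : (0:ℝ) < 1 / 2) one_half_pos (add_halves 1)
  have hmid : exp (1 / 2 * log x + 1 / 2 * log y) = √(x * y) := by
    rw [← mul_add, ← log_mul hx.1.ne' hy.1.ne', sqrt_eq_rpow,
      rpow_def_of_pos hxy₀, mul_comm]
  simp only [smul_eq_mul, exp_log hx.1, exp_log hy.1, hmid] at key
  rw [← log_lt_log_iff (by positivity) hm, log_sqrt (mul_pos hmx hmy).le,
    log_mul hmx.ne' hmy.ne']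
  linarith

end LogConcavity

section PowerMean

variable {lam x y : ℝ}

lemma pmean_self (hx : 0 < x) : pmean lam x x = x := by
  unfold pmean
  split_ifs with h
  · exact sqrt_mul_self hx.le
  · rw [add_self_div_two, ← rpow_mul hx.le, mul_one_div_cancel h, rpow_one]

lemma pmean_pos (hx : 0 < x) (hy : 0 < y) : 0 < pmean lam x y := by
  unfold pmean
  split_ifs <;> positivity

lemma pmean_le_sqrt_mul (hlam : lam ≤ 0) (hx : 0 < x) (hy : 0 < y) :
    pmean lam x y ≤ √(x * y) := by
  unfold pmean
  split_ifs with h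
  · exact le_rfl
  have hgm : √(x * y) ^ lam ≤ (x ^ lam + y ^ lam) / 2 := by
    rw [sqrt_eq_rpow, ← rpow_mul (mul_pos hx hy).le, mul_comm (1 / 2 : ℝ),
      rpow_mul (mul_pos hx hy).le, mul_rpow hx.le hy.le, ← sqrt_eq_rpow, sqrt_le_iff]
    exact ⟨by positivity, by nlinarith [sq_nonneg (x ^ lam - y ^ lam)]⟩
  calc ((x ^ lam + y ^ lam) / 2) ^ (1 / lam)
      ≤ (√(x * y) ^ lam) ^ (1 / lam) :=
        rpow_le_rpow_of_nonpos (by positivity) hgm (one_div_nonpos.2 hlam)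
    _ = √(x * y) := by rw [one_div, rpow_rpow_inv (sqrt_nonneg _) h]

end PowerMean

lemma pmean_m_lt_m_pmean {lam x y : ℝ} (hlam : lam ≤ 0) (hx : x ∈ Ioo (0:ℝ) 1)
    (hy : y ∈ Ioo (0:ℝ) 1) (hxy : x ≠ y) : pmean lam (m x) (m y) < m (pmean lam x y) := by
  have hsqrt := sqrt_mul_mem_Ioo hx hy
  have hM := pmean_le_sqrt_mul hlam hx.1 hy.1
  calc pmean lam (m x) (m y)
      ≤ √(m x * m y) := pmean_le_sqrt_mul hlam (m_pos_of_mem_Ioo hx) (m_pos_of_mem_Ioo hy)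
    _ < m √(x * y) := sqrt_mul_m_lt_m_sqrt_mul hx hy hxy
    _ ≤ m (pmean lam x y) :=
        strictAntiOn_m.antitoneOn ⟨pmean_pos hx.1 hy.1, hM.trans_lt hsqrt.2⟩ hsqrt hM

theorem stmt_2 (lam : ℝ) (hlam : lam ≤ 0) :
    ∀ x ∈ Set.Ioo (0:ℝ) 1, ∀ y ∈ Set.Ioo (0:ℝ) 1,
      (x ≠ y → pmean lam (m x) (m y) < m (pmean lam x y)) ∧
      (pmean lam (m x) (m y) = m (pmean lam x y) ↔ x = y) := by
  intro x hx y hy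
  refine ⟨pmean_m_lt_m_pmean hlam hx hy, fun h => ?_, ?_⟩
  · by_contra hxy
    exact (pmean_m_lt_m_pmean hlam hx hy hxy).ne h
  · rintro rfl
    rw [pmean_self hx.1, pmean_self (m_pos_of_mem_Ioo hx)]
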